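/- arXiv:1108.1267 — 7 statements merged into one kernel-verified Lean document; each statement's English description precedes it below -/
import Mathlib

section
/- Let a and d be coprime integers and let n be a positive integer with n ≤ 16. Then the arithmetic progression a, a+d, ..., a+(n−1)d contains a term that is relatively prime to every other term; that is, there exists an index k with 0 ≤ k ≤ n−1 such that gcd(a+kd, a+jd) = 1 for all j with 0 ≤ j ≤ n−1 and j ≠ k. -/
/-!
A prime `p` dividing two terms `a + k d` and `a + j d` divides `(j - k) d` but not `d`, so it
divides `j - k` and is smaller than `n`; moreover the terms divisible by `p` are exactly those
whose index lies in the class of `-a / d` mod `p`. Hence the term of index `k` is coprime to all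
others unless, for some prime `p < n`, the index `k` lies in that class and some other index of
the progression is congruent to it mod `p`. For `n ≤ 16`, an exhaustive search over all choices
of one residue class for each prime `p < n` shows that some index always escapes.
-/

namespace Pillai

/-- `p ≤ max k (n - 1 - k)` says that some index `j < n` other than `k` is congruent to `k`
mod `p`. -/
def Blocked (n p : ℕ) (c : ZMod p) (k : ℕ) : Prop :=
  (k : ZMod p) = c ∧ p ≤ max k (n - 1 - k)

/-- The primes of `ps` are taken in increasing order, so an index `k` with
`max k (n - 1 - k) < p` can be blocked by none of the remaining primes and ends the search. -/
def hasSurvivor (n : ℕ) : List ℕ → List ℕ → Bool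
  | free, [] => !free.isEmpty
  | free, p :: ps => free.any (fun k => max k (n - 1 - k) < p) ||
      (List.range p).all fun r =>
        hasSurvivor n (free.filter fun k => !(k % p == r && p ≤ max k (n - 1 - k))) ps

theorem exists_mem_forall_not_blocked_of_hasSurvivor {n : ℕ} {ps : List ℕ}
    (hsorted : ps.Pairwise (· ≤ ·)) (hpos : ∀ p ∈ ps, 0 < p) {free : List ℕ}
    (h : hasSurvivor n free ps = true) (c : (p : ℕ) → ZMod p) :
    ∃ k ∈ free, ∀ p ∈ ps, ¬ Blocked n p (c p) k := by
  induction ps generalizing free with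
  | nil =>
    obtain ⟨k, hk⟩ := List.exists_mem_of_ne_nil free (by simpa [hasSurvivor] using h)
    exact ⟨k, hk, by simp⟩
  | cons p ps ih =>
    rw [List.pairwise_cons] at hsorted
    simp only [hasSurvivor, Bool.or_eq_true, List.any_eq_true, decide_eq_true_eq,
      List.all_eq_true, List.mem_range] at h
    rcases h with ⟨k, hk, hsmall⟩ | hall
    · refine ⟨k, hk, fun q hq hblocked => ?_⟩
      have hpq : p ≤ q := by
        rcases List.mem_cons.mp hq with rfl | hq
        exacts [le_rfl, hsorted.1 q hq]
      exact absurd hblocked.2 (by omega)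
    · have : NeZero p := ⟨(hpos p List.mem_cons_self).ne'⟩
      obtain ⟨k, hk, hks⟩ := ih hsorted.2 (fun q hq => hpos q (List.mem_cons_of_mem p hq))
        (hall (c p).val (ZMod.val_lt _))
      simp only [List.mem_filter, Bool.not_eq_true', Bool.and_eq_false_iff, beq_eq_false_iff_ne,
        decide_eq_false_iff_not, not_le] at hk
      refine ⟨k, hk.1, fun q hq hblocked => ?_⟩
      rcases List.mem_cons.mp hq with rfl | hq
      · rcases hk.2 with hne | hlt
        · exact hne (by rw [← hblocked.1, ZMod.val_natCast])
        · exact absurd hblocked.2 (by omega)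
      · exact hks q hq hblocked

set_option maxHeartbeats 1000000 in
theorem hasSurvivor_range_primes :
    ∀ n < 17, 0 < n → hasSurvivor n (List.range n) ((List.range n).filter Nat.Prime) = true := by
  decide

theorem exists_lt_forall_not_blocked {n : ℕ} (hn : 0 < n) (hn16 : n ≤ 16)
    (c : (p : ℕ) → ZMod p) : ∃ k < n, ∀ p, p.Prime → ¬ Blocked n p (c p) k := by
  obtain ⟨k, hk, hks⟩ := exists_mem_forall_not_blocked_of_hasSurvivor
    ((List.pairwise_lt_range.filter _).imp le_of_lt)
    (fun p hp => (by simpa using List.of_mem_filter hp : p.Prime).pos)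
    (hasSurvivor_range_primes n (by omega) hn) c
  rw [List.mem_range] at hk
  refine ⟨k, hk, fun p hp hblocked => hks p ?_ hblocked⟩
  have := hblocked.2
  simpa [List.mem_filter, hp] using (by omega : p < n)

theorem le_max_of_mod_eq_mod {n p j k : ℕ} (hj : j < n) (hjk : j ≠ k) (h : j % p = k % p) :
    p ≤ max k (n - 1 - k) := by
  rcases hjk.lt_or_gt with hlt | hlt
  · have := Nat.le_of_dvd (by omega) (Nat.ModEq.dvd' h)
    omega
  · have := Nat.le_of_dvd (by omega) (Nat.ModEq.dvd' h.symm)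
    omega

theorem intCast_eq_neg_mul_inv_of_dvd {p : ℕ} [Fact p.Prime] {a d : ℤ} (had : IsCoprime a d)
    {k : ℤ} (h : (p : ℤ) ∣ a + k * d) : (k : ZMod p) = -(a : ZMod p) * (d : ZMod p)⁻¹ := by
  have hsum : (a + k * d : ZMod p) = 0 := by
    exact_mod_cast (ZMod.intCast_zmod_eq_zero_iff_dvd _ p).mpr h
  have hd : (d : ZMod p) ≠ 0 := by
    intro hd
    have hcop := had.map (Int.castRingHom (ZMod p))
    simp only [eq_intCast, hd, isCoprime_zero_right] at hcop
    simp_all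
  rw [eq_mul_inv_iff_mul_eq₀ hd]
  linear_combination hsum

theorem blocked_of_prime_dvd_gcd {a d : ℤ} (had : Int.gcd a d = 1) {n p j k : ℕ} (hp : p.Prime)
    (hj : j < n) (hjk : j ≠ k) (h : p ∣ Int.gcd (a + k * d) (a + j * d)) :
    Blocked n p (-(a : ZMod p) * (d : ZMod p)⁻¹) k := by
  have : Fact p.Prime := ⟨hp⟩
  have hcop := Int.isCoprime_iff_gcd_eq_one.mpr had
  have hpg := Int.natCast_dvd_natCast.mpr h
  have hk := intCast_eq_neg_mul_inv_of_dvd hcop (hpg.trans (Int.gcd_dvd_left _ _))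
  have hj' := intCast_eq_neg_mul_inv_of_dvd hcop (hpg.trans (Int.gcd_dvd_right _ _))
  push_cast at hk hj'
  exact ⟨hk, le_max_of_mod_eq_mod hj hjk ((ZMod.natCast_eq_natCast_iff' j k p).mp (hj'.trans hk.symm))⟩

end Pillai

/-- **Generalized Pillai Theorem.** If `a` and `d` are coprime integers and `n` is a
positive integer at most 16, then the arithmetic progression `a, a+d, ..., a+(n-1)d`
contains a term relatively prime to all the others. -/
theorem generalized_pillai (a d : ℤ) (had : Int.gcd a d = 1)
    (n : ℕ) (hn : 0 < n) (hn16 : n ≤ 16) :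
    ∃ k < n, ∀ j < n, j ≠ k → Int.gcd (a + (k : ℤ) * d) (a + (j : ℤ) * d) = 1 := by
  obtain ⟨k, hk, hfree⟩ :=
    Pillai.exists_lt_forall_not_blocked hn hn16 fun p => -(a : ZMod p) * (d : ZMod p)⁻¹
  refine ⟨k, hk, fun j hj hjk => ?_⟩
  by_contra hgcd
  obtain ⟨p, hp, hpg⟩ := Nat.exists_prime_and_dvd hgcd
  exact hfree p hp (Pillai.blocked_of_prime_dvd_gcd had hp hj hjk hpg)
end

section
/- Let R be a σ-atomic GCD domain of characteristic 0, and let n be a positive integer with n ≤ 16 such that for every rational prime p with p ≤ n − 2, any two prime elements of R dividing p·1_R are associated. Then for any coprime a, d ∈ R, the arithmetic progression a, a+d, ..., a+(n−1)d contains a term that is relatively prime to all the others; that is, there exists an index k with 0 ≤ k ≤ n−1 such that gcd(a+kd, a+jd) is a unit for all j ≠ k with 0 ≤ j ≤ n−1. -/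
/-!
A prime `q` of `R` dividing two terms `a + i • d` and `a + j • d` cannot divide `d`, so it divides
`j - i` and lies over a rational prime `p` with `i ≡ j [MOD p]`. When all primes over `p` are
associated, the indices of the terms sharing a prime factor with `p` form one residue class mod `p`;
for `p = n - 1` the only congruent pair of indices is `{0, n - 1}`. So it suffices to find `k < n`
outside every chosen residue class (one per prime) that has two elements in `[0, n)`. For `n ≤ 16`
this is the combinatorial core of Pillai's theorem on consecutive integers, checked by enumeration.
-/

/-- `k` lies outside the residue class `c` mod `p`, unless that class has at most one element
in `[0, n)`. -/
def AvoidsClass (n p c k : ℕ) : Prop := k % p = c → n ≤ c + p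

instance (n p c k : ℕ) : Decidable (AvoidsClass n p c k) :=
  inferInstanceAs (Decidable (_ → _))

theorem AvoidsClass.of_min_mod {n p c k : ℕ} (h : AvoidsClass n p (min (c % p) (n - p)) k) :
    AvoidsClass n p c k := by
  intro hk
  have hc : c % p = c := hk ▸ Nat.mod_mod k p
  by_contra hlt
  have hmin : min (c % p) (n - p) = c := by omega
  have := h (by rw [hmin, hk])
  omega

-- Residues `c > n - p` give classes with at most one element in `[0, n)`, hence the ranges.
set_option synthInstance.maxHeartbeats 1000000 in
set_option synthInstance.maxSize 1000000 in
theorem exists_avoidsClass_small_primes : ∀ n < 17, 0 < n →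
    ∀ c₂ ≤ min 1 (n - 2), ∀ c₃ ≤ min 2 (n - 3), ∀ c₅ ≤ min 4 (n - 5),
    ∀ c₇ ≤ min 6 (n - 7), ∀ c₁₁ ≤ min 10 (n - 11), ∀ c₁₃ ≤ min 12 (n - 13),
    ∃ k < n, AvoidsClass n 2 c₂ k ∧ AvoidsClass n 3 c₃ k ∧ AvoidsClass n 5 c₅ k ∧
      AvoidsClass n 7 c₇ k ∧ AvoidsClass n 11 c₁₁ k ∧ AvoidsClass n 13 c₁₃ k := by
  decide +kernel

theorem exists_avoidsClass_of_le_sixteen {n : ℕ} (hn : 0 < n) (hn16 : n ≤ 16) (r : ℕ → ℕ) :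
    ∃ k < n, ∀ p, p.Prime → AvoidsClass n p (r p) k := by
  let c : ℕ → ℕ := fun p => min (r p % p) (n - p)
  have hc : ∀ p, 0 < p → c p ≤ min (p - 1) (n - p) := fun p hp =>
    min_le_min_right _ (Nat.le_sub_one_of_lt (Nat.mod_lt _ hp))
  obtain ⟨k, hk, h₂, h₃, h₅, h₇, h₁₁, h₁₃⟩ := exists_avoidsClass_small_primes n (by omega) hn
    (c 2) (hc 2 (by norm_num)) (c 3) (hc 3 (by norm_num)) (c 5) (hc 5 (by norm_num))
    (c 7) (hc 7 (by norm_num)) (c 11) (hc 11 (by norm_num)) (c 13) (hc 13 (by norm_num))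
  refine ⟨k, hk, fun p hp => AvoidsClass.of_min_mod ?_⟩
  rcases le_or_gt n p with hnp | hpn
  · intro _
    omega
  · have : p < 16 := by omega
    interval_cases p <;> first | assumption | norm_num at hp

theorem Nat.ModEq.mod_add_lt {n p j k : ℕ} (h : j ≡ k [MOD p]) (hjk : j ≠ k) (hj : j < n)
    (hk : k < n) : k % p + p < n := by
  wlog hlt : j < k generalizing j k
  · have := this h.symm hjk.symm hk hj (by omega)
    rwa [h] at this
  have hp : p ≤ k - j := Nat.le_of_dvd (by omega) ((Nat.modEq_iff_dvd' hlt.le).mp h)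
  have := Nat.mod_le j p
  unfold Nat.ModEq at h
  omega

theorem exists_isolated_index {n : ℕ} (hn : 0 < n) (hn16 : n ≤ 16) (M : ℕ → ℕ → Prop)
    (hM : ∀ p, p.Prime → p ≤ n - 2 → ∀ i j, M p i → M p j → i ≡ j [MOD p]) :
    ∃ k < n, ∀ j < n, j ≠ k → ∀ p, p.Prime → M p k → ¬j ≡ k [MOD p] := by
  -- For `p = n - 1` the class of `0` is the only one with two elements in `[0, n)`.
  obtain ⟨k, hk, hkr⟩ := exists_avoidsClass_of_le_sixteen hn hn16
    fun p => if p ≤ n - 2 then Classical.epsilon (M p) % p else 0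
  refine ⟨k, hk, fun j hj hjk p hp hMk hjk' => ?_⟩
  have hcrowded := hjk'.mod_add_lt hjk hj hk
  have hres : k % p = if p ≤ n - 2 then Classical.epsilon (M p) % p else 0 := by
    split_ifs with hpn
    · exact hM p hp hpn _ _ hMk (Classical.epsilon_spec ⟨k, hMk⟩)
    · omega
  have := hkr p hp hres
  rw [← hres] at this
  omega

theorem isRelPrime_of_no_prime_factors {α : Type*} [CommMonoidWithZero α] [DecompositionMonoid α]
    (hσ : ∀ x : α, x ≠ 0 → ¬IsUnit x → ∃ q : α, Irreducible q ∧ q ∣ x) {x y : α}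
    (h0 : ¬(x = 0 ∧ y = 0)) (h : ∀ q : α, Prime q → q ∣ x → ¬q ∣ y) : IsRelPrime x y :=
  isRelPrime_of_no_nonunits_factors h0 fun z hz hz0 hzx hzy =>
    let ⟨q, hq, hqz⟩ := hσ z hz0 hz
    h q hq.prime (hqz.trans hzx) (hqz.trans hzy)

section ArithmeticProgression

variable {R : Type*} [CommRing R] {a d q : R} {i j : ℕ}

theorem Prime.exists_nat_prime_dvd_of_dvd_natCast (hq : Prime q) {m : ℕ} (hm : m ≠ 0)
    (h : q ∣ (m : R)) : ∃ p : ℕ, p.Prime ∧ p ∣ m ∧ q ∣ (p : R) := by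
  induction m using Nat.recOnMul with
  | zero => exact absurd rfl hm
  | one => exact absurd (isUnit_of_dvd_one (by simpa using h)) hq.not_isUnit
  | prime p hp => exact ⟨p, hp, dvd_rfl, h⟩
  | mul m₁ m₂ ih₁ ih₂ =>
    rw [Nat.cast_mul] at h
    rcases hq.dvd_or_dvd h with h₁ | h₂
    · obtain ⟨p, hp, hpm, hqp⟩ := ih₁ (left_ne_zero_of_mul hm) h₁
      exact ⟨p, hp, hpm.mul_right m₂, hqp⟩
    · obtain ⟨p, hp, hpm, hqp⟩ := ih₂ (right_ne_zero_of_mul hm) h₂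
      exact ⟨p, hp, hpm.mul_left m₁, hqp⟩

theorem Nat.Prime.dvd_of_dvd_natCast (hq : ¬IsUnit q) {p m : ℕ} (hp : p.Prime)
    (hqp : q ∣ (p : R)) (hqm : q ∣ (m : R)) : p ∣ m := by
  by_contra h
  exact hq (((hp.coprime_iff_not_dvd.mpr h).cast (R := R)).isUnit_of_dvd' hqp hqm)

theorem dvd_natCast_sub_of_dvd_add_nsmul (had : IsRelPrime a d) (hq : Prime q) (hij : i ≤ j)
    (hi : q ∣ a + i • d) (hj : q ∣ a + j • d) : q ∣ ((j - i : ℕ) : R) := by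
  have hdiff : ((j - i : ℕ) : R) * d = (a + j • d) - (a + i • d) := by
    rw [Nat.cast_sub hij, nsmul_eq_mul, nsmul_eq_mul]
    ring
  refine (hq.dvd_or_dvd (hdiff ▸ dvd_sub hj hi)).resolve_right fun hqd =>
    hq.not_isUnit (had ?_ hqd)
  exact (dvd_add_left (by rw [nsmul_eq_mul]; exact hqd.mul_left _)).mp hi

theorem modEq_of_dvd_add_nsmul (had : IsRelPrime a d) (hq : Prime q) {p : ℕ} (hp : p.Prime)
    (hqp : q ∣ (p : R)) (hi : q ∣ a + i • d) (hj : q ∣ a + j • d) : i ≡ j [MOD p] := by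
  wlog hij : i ≤ j generalizing i j
  · exact (this hj hi (le_of_not_ge hij)).symm
  exact (Nat.modEq_iff_dvd' hij).mpr
    (hp.dvd_of_dvd_natCast hq.not_isUnit hqp (dvd_natCast_sub_of_dvd_add_nsmul had hq hij hi hj))

theorem exists_prime_modEq_of_dvd_add_nsmul (had : IsRelPrime a d) (hq : Prime q) (hij : i ≠ j)
    (hi : q ∣ a + i • d) (hj : q ∣ a + j • d) : ∃ p : ℕ, p.Prime ∧ q ∣ (p : R) ∧ i ≡ j [MOD p] := by
  wlog hlt : i < j generalizing i j
  · obtain ⟨p, hp, hqp, h⟩ := this hij.symm hj hi (by omega)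
    exact ⟨p, hp, hqp, h.symm⟩
  obtain ⟨p, hp, hpm, hqp⟩ := hq.exists_nat_prime_dvd_of_dvd_natCast (by omega)
    (dvd_natCast_sub_of_dvd_add_nsmul had hq hlt.le hi hj)
  exact ⟨p, hp, hqp, (Nat.modEq_iff_dvd' hlt.le).mpr hpm⟩

theorem not_add_nsmul_eq_zero_and [IsDomain R] [CharZero R] (had : IsRelPrime a d) (hij : i ≠ j) :
    ¬(a + i • d = 0 ∧ a + j • d = 0) := by
  rintro ⟨hi, hj⟩
  rcases eq_or_ne d 0 with rfl | hd
  · simp only [smul_zero, add_zero] at hi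
    exact not_isRelPrime_zero_zero (hi ▸ had)
  · refine hij (Nat.cast_injective (R := R) (mul_right_cancel₀ hd ?_))
    rw [nsmul_eq_mul] at hi hj
    linear_combination hi - hj

end ArithmeticProgression

/-- Arithmetic progressions in a σ-atomic GCD domain of characteristic zero:
if `n ≤ 16` and every rational prime `p ≤ n - 2` has at most one prime divisor in `R`
up to associates (i.e. `n ≤ 1 + δ_R`), then any arithmetic progression of `n` terms
whose first term is coprime to the common difference contains a term relatively
prime to all the others. -/
theorem ap_gcd_domain_exists_coprime_term
    {R : Type*} [CommRing R] [IsDomain R] [GCDMonoid R] [CharZero R]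
    (hσ : ∀ x : R, x ≠ 0 → ¬IsUnit x → ∃ q : R, Irreducible q ∧ q ∣ x)
    (n : ℕ) (hn : 0 < n) (hn16 : n ≤ 16)
    (hδ : ∀ p : ℕ, p.Prime → p ≤ n - 2 →
      ∀ P Q : R, Prime P → Prime Q → P ∣ (p : R) → Q ∣ (p : R) → Associated P Q)
    (a d : R) (had : IsUnit (gcd a d)) :
    ∃ k < n, ∀ j < n, j ≠ k → IsUnit (gcd (a + (k : ℕ) • d) (a + (j : ℕ) • d)) := by
  rw [gcd_isUnit_iff_isRelPrime] at had
  obtain ⟨k, hk, hiso⟩ := exists_isolated_index hn hn16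
    (fun p j => ∃ q : R, Prime q ∧ q ∣ (p : R) ∧ q ∣ a + j • d)
    fun p hp hpn i j ⟨q, hq, hqp, hqi⟩ ⟨q', hq', hq'p, hq'j⟩ =>
      modEq_of_dvd_add_nsmul had hq hp hqp hqi
        ((hδ p hp hpn q q' hq hq' hqp hq'p).dvd_iff_dvd_left.mpr hq'j)
  refine ⟨k, hk, fun j hj hjk => gcd_isUnit_iff_isRelPrime.mpr ?_⟩
  refine isRelPrime_of_no_prime_factors hσ (not_add_nsmul_eq_zero_and had hjk.symm)
    fun q hq hqk hqj => ?_
  obtain ⟨p, hp, hqp, hkj⟩ := exists_prime_modEq_of_dvd_add_nsmul had hq hjk.symm hqk hqj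
  exact hiso j hj hjk p hp ⟨q, hq, hqp, hqk⟩ hkj.symm
end

section
/- Let k be an integer with 3 ≤ k ≤ 8. Suppose that for all coprime integers a, d with d odd, the arithmetic progression a, a+d, ..., a+(2k−2)d (with 2k−1 terms) contains a term relatively prime to all the others. Then for all coprime integers a, d with d odd, the arithmetic progression a, a+d, ..., a+(2k−1)d (with 2k terms) also contains a term relatively prime to all the others. -/
/-!
Write `T j = a + j d`. Apply the hypothesis to the first and to the last `2k - 1` of the `2k`
terms, getting terms `T i₁` and `T i₂` isolated (coprime to all others) in their windows. If
neither stays isolated in the full progression, a prime `p` divides `T i₁` and `T (2k - 1)`, and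
a prime `q` divides `T 0` and `T i₂`. Since `gcd(a, d) = 1`, a prime dividing two terms divides
the difference of their indices, and as no other term of a window may share a prime with its
isolated term, this forces `p = 2k - 1 - i₁` and `q = i₂`. An isolated term of a window of
length at least four is odd (it is coprime to a term two steps away, of the same parity), so
`p`, `q` are odd and, `d` being odd, `i₁ ≡ i₂` (mod 2). Then `2k - 1 = p + q + (i₁ - i₂)` would
be even.
-/

open Set

section CommRing

variable {R : Type*} [CommRing R] {a d x i j : R}

theorem dvd_add_mul_of_dvd_sub (hi : x ∣ a + i * d) (hij : x ∣ j - i) : x ∣ a + j * d := by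
  have : a + j * d = a + i * d + (j - i) * d := by ring
  exact this ▸ hi.add (hij.mul_right d)

theorem Prime.dvd_sub_of_dvd_add_mul (had : IsCoprime a d) (hx : Prime x)
    (hi : x ∣ a + i * d) (hj : x ∣ a + j * d) : x ∣ j - i := by
  have hdiff : x ∣ (j - i) * d := by
    have := hj.sub hi
    rwa [show a + j * d - (a + i * d) = (j - i) * d by ring] at this
  refine (hx.dvd_or_dvd hdiff).resolve_right fun hd => hx.not_isUnit ?_
  have ha : x ∣ a := by simpa using hi.sub (hd.mul_left i)
  exact had.isUnit_of_dvd' ha hd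

end CommRing

theorem Int.exists_prime_dvd_of_not_isCoprime {x y : ℤ} (h : ¬IsCoprime x y) :
    ∃ p : ℕ, p.Prime ∧ (p : ℤ) ∣ x ∧ (p : ℤ) ∣ y := by
  simpa [Int.natCast_dvd] using
    Nat.Prime.not_coprime_iff_dvd.mp (Int.isCoprime_iff_nat_coprime.not.mp h)

def IsCoprimeToOthers (a d m n i : ℤ) : Prop :=
  i ∈ Ico m n ∧ ∀ j ∈ Ico m n, j ≠ i → IsCoprime (a + i * d) (a + j * d)

namespace IsCoprimeToOthers

variable {a d m n i : ℤ}

theorem not_dvd_sub (h : IsCoprimeToOthers a d m n i) {x j : ℤ} (hx : ¬IsUnit x)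
    (hxi : x ∣ a + i * d) (hj : j ∈ Ico m n) (hji : j ≠ i) : ¬x ∣ j - i := fun hxj =>
  hx ((h.2 j hj hji).isUnit_of_dvd' hxi (dvd_add_mul_of_dvd_sub hxi hxj))

theorem odd (h : IsCoprimeToOthers a d m n i) (hmn : m + 4 ≤ n) : Odd (a + i * d) := by
  obtain ⟨him, hin⟩ := h.1
  rw [← Int.not_even_iff_odd, even_iff_two_dvd]
  intro h2
  by_cases hright : i + 2 < n
  · exact h.not_dvd_sub Int.prime_two.not_isUnit h2 (j := i + 2) ⟨by omega, hright⟩ (by omega)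
      (by simp)
  · exact h.not_dvd_sub Int.prime_two.not_isUnit h2 (j := i - 2) ⟨by omega, by omega⟩ (by omega)
      (by simp)

theorem eq_sub_of_prime_dvd_right (h : IsCoprimeToOthers a d m n i) (had : IsCoprime a d)
    {p : ℕ} (hp : p.Prime) (hpi : (p : ℤ) ∣ a + i * d) (hpn : (p : ℤ) ∣ a + n * d) :
    (p : ℤ) = n - i := by
  have hle := Int.le_of_dvd (by linarith [h.1.2])
    ((Nat.prime_iff_prime_int.mp hp).dvd_sub_of_dvd_add_mul had hpi hpn)
  by_contra hne
  exact h.not_dvd_sub (Nat.prime_iff_prime_int.mp hp).not_isUnit hpi (j := i + p)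
    ⟨by linarith [h.1.1, hp.pos], by omega⟩ (by have := hp.pos; omega) (by simp)

theorem eq_sub_of_prime_dvd_left (h : IsCoprimeToOthers a d (m + 1) n i) (had : IsCoprime a d)
    {p : ℕ} (hp : p.Prime) (hpi : (p : ℤ) ∣ a + i * d) (hpm : (p : ℤ) ∣ a + m * d) :
    (p : ℤ) = i - m := by
  have hle := Int.le_of_dvd (by linarith [h.1.1])
    ((Nat.prime_iff_prime_int.mp hp).dvd_sub_of_dvd_add_mul had hpm hpi)
  by_contra hne
  exact h.not_dvd_sub (Nat.prime_iff_prime_int.mp hp).not_isUnit hpi (j := i - p)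
    ⟨by omega, by linarith [h.1.2, hp.pos]⟩ (by linarith [hp.pos]) (by simp)

theorem extend_right (h : IsCoprimeToOthers a d m n i)
    (hn : IsCoprime (a + i * d) (a + n * d)) : IsCoprimeToOthers a d m (n + 1) i := by
  refine ⟨⟨h.1.1, by linarith [h.1.2]⟩, fun j ⟨hmj, hjn⟩ hji => ?_⟩
  rcases (show j < n ∨ j = n by omega) with hjn | rfl
  · exact h.2 j ⟨hmj, hjn⟩ hji
  · exact hn

theorem extend_left (h : IsCoprimeToOthers a d (m + 1) n i)
    (hm : IsCoprime (a + i * d) (a + m * d)) : IsCoprimeToOthers a d m n i := by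
  refine ⟨⟨by linarith [h.1.1], h.1.2⟩, fun j ⟨hmj, hjn⟩ hji => ?_⟩
  rcases (show m + 1 ≤ j ∨ j = m by omega) with hmj | rfl
  · exact h.2 j ⟨hmj, hjn⟩ hji
  · exact hm

theorem shift (h : IsCoprimeToOthers (a + d) d m n i) :
    IsCoprimeToOthers a d (m + 1) (n + 1) (i + 1) := by
  refine ⟨⟨by linarith [h.1.1], by linarith [h.1.2]⟩, fun j hj hji => ?_⟩
  have := h.2 (j - 1) ⟨by linarith [hj.1], by linarith [hj.2]⟩ (by omega)
  convert this using 1 <;> ring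

end IsCoprimeToOthers

theorem isCoprimeToOthers_iff_nat {a d : ℤ} {n : ℕ} :
    (∃ i < n, ∀ j < n, j ≠ i → Int.gcd (a + (i : ℤ) * d) (a + (j : ℤ) * d) = 1) ↔
      ∃ i, IsCoprimeToOthers a d 0 n i := by
  constructor
  · rintro ⟨i, hin, h⟩
    refine ⟨i, ⟨by positivity, by exact_mod_cast hin⟩, fun j ⟨hj0, hjn⟩ hji => ?_⟩
    lift j to ℕ using hj0
    exact Int.isCoprime_iff_gcd_eq_one.mpr (h j (by exact_mod_cast hjn) (by exact_mod_cast hji))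
  · rintro ⟨i, ⟨hi0, hin⟩, h⟩
    lift i to ℕ using hi0
    exact ⟨i, by exact_mod_cast hin, fun j hjn hji => Int.isCoprime_iff_gcd_eq_one.mp
      (h j ⟨by positivity, by exact_mod_cast hjn⟩ (by exact_mod_cast hji))⟩

theorem exists_isCoprimeToOthers_of_odd_length {a d n i₁ i₂ : ℤ} (had : IsCoprime a d)
    (hd : Odd d) (hn : Odd n) (hn4 : 4 ≤ n) (h₁ : IsCoprimeToOthers a d 0 n i₁)
    (h₂ : IsCoprimeToOthers a d (0 + 1) (n + 1) i₂) :
    ∃ i, IsCoprimeToOthers a d 0 (n + 1) i := by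
  by_contra! hnone
  obtain ⟨p, hp, hpi₁, hpn⟩ :=
    Int.exists_prime_dvd_of_not_isCoprime fun hc => hnone i₁ (h₁.extend_right hc)
  obtain ⟨q, hq, hqi₂, hq0⟩ :=
    Int.exists_prime_dvd_of_not_isCoprime fun hc => hnone i₂ (h₂.extend_left hc)
  have hp_eq := h₁.eq_sub_of_prime_dvd_right had hp hpi₁ hpn
  have hq_eq := h₂.eq_sub_of_prime_dvd_left had hq hqi₂ hq0
  have hodd₁ := h₁.odd (by linarith)
  have hodd₂ := h₂.odd (by linarith)
  have hp_odd : Odd p := (Int.natAbs_odd.mpr hodd₁).of_dvd_nat (Int.natCast_dvd.mp hpi₁)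
  have hq_odd : Odd q := (Int.natAbs_odd.mpr hodd₂).of_dvd_nat (Int.natCast_dvd.mp hqi₂)
  have hi_even : Even (i₁ - i₂) := by
    have := hodd₁.sub_odd hodd₂
    rw [show a + i₁ * d - (a + i₂ * d) = (i₁ - i₂) * d by ring] at this
    exact (Int.even_mul.mp this).resolve_right (Int.not_even_iff_odd.mpr hd)
  obtain ⟨r, hr⟩ := hn
  obtain ⟨s, hs⟩ := hp_odd
  obtain ⟨t, ht⟩ := hq_odd
  obtain ⟨u, hu⟩ := hi_even
  omega

theorem pillai_step_odd_diff_general (k : ℕ) (hk3 : 3 ≤ k)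
    (H : ∀ a d : ℤ, Int.gcd a d = 1 → Odd d →
      ∃ i < 2 * k - 1, ∀ j < 2 * k - 1, j ≠ i →
        Int.gcd (a + (i : ℤ) * d) (a + (j : ℤ) * d) = 1) :
    ∀ a d : ℤ, Int.gcd a d = 1 → Odd d →
      ∃ i < 2 * k, ∀ j < 2 * k, j ≠ i →
        Int.gcd (a + (i : ℤ) * d) (a + (j : ℤ) * d) = 1 := by
  intro a d had hd
  have had' : IsCoprime a d := Int.isCoprime_iff_gcd_eq_one.mpr had
  have hshift : Int.gcd (a + d) d = 1 :=
    Int.isCoprime_iff_gcd_eq_one.mp (by simpa using had'.add_mul_right_left 1)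
  obtain ⟨i₁, h₁⟩ := isCoprimeToOthers_iff_nat.mp (H a d had hd)
  obtain ⟨i₂, h₂⟩ := isCoprimeToOthers_iff_nat.mp (H (a + d) d hshift hd)
  obtain ⟨i, hi⟩ := exists_isCoprimeToOthers_of_odd_length had' hd ⟨k - 1, by omega⟩
    (by omega) h₁ h₂.shift
  rw [show ((2 * k - 1 : ℕ) : ℤ) + 1 = (2 * k : ℕ) by omega] at hi
  exact isCoprimeToOthers_iff_nat.mpr ⟨i, hi⟩

/-- If the Generalized Pillai Theorem holds for progressions of `2k-1` terms with odd
common difference (`3 ≤ k ≤ 8`), then it holds for progressions of `2k` terms with odd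
common difference. -/
theorem pillai_step_odd_diff (k : ℕ) (hk3 : 3 ≤ k) (hk8 : k ≤ 8)
    (H : ∀ a d : ℤ, Int.gcd a d = 1 → Odd d →
      ∃ i < 2 * k - 1, ∀ j < 2 * k - 1, j ≠ i →
        Int.gcd (a + (i : ℤ) * d) (a + (j : ℤ) * d) = 1) :
    ∀ a d : ℤ, Int.gcd a d = 1 → Odd d →
      ∃ i < 2 * k, ∀ j < 2 * k, j ≠ i →
        Int.gcd (a + (i : ℤ) * d) (a + (j : ℤ) * d) = 1 :=
  pillai_step_odd_diff_general k hk3 H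
end

section
/- Let R be a GCD domain, let m be a positive integer, and for i = 1, ..., m let u_i, v_i ∈ R with v_i ≠ 0. Assume that gcd(v_i, v_j) lies in the ideal R·v_i + R·v_j for all 1 ≤ i, j ≤ m. Then there exists z ∈ R satisfying v_i ∣ (z − u_i) for all i = 1, ..., m if and only if gcd(v_i, v_j) divides (u_i − u_j) for all 1 ≤ i, j ≤ m. -/
/-!
A system `z ≡ u i (mod I i)` of congruences modulo ideals can be solved one congruence at a time
from pairwise compatibility `u i - u j ∈ I i + I j`, provided `(⋂_{i ∈ t} I i) + I j` contains
`⋂_{i ∈ t} (I i + I j)`. For principal ideals of a GCD ring whose pairwise sums are principal this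
distributivity reduces to three ideals: if `(a) + C = (d₁)` and `(b) + C = (d₂)`, write
`a = d₁ a'` and `1 = x₁ a' + y₁ g₁` with `d₁ g₁ ∈ C` (similarly for `b`); then expanding
`lcm d₁ d₂ = lcm d₁ d₂ (x₁ a' + y₁ g₁) (x₂ b' + y₂ g₂)` shows `lcm d₁ d₂ ∈ (lcm a b) + C`,
because `lcm a b ∣ a' b' lcm d₁ d₂`.
-/

open Ideal

section CommRing

variable {R : Type*} [CommRing R]

theorem Ideal.exists_sub_mem_of_sub_mem_sup {I J : Ideal R} {a b : R} (h : a - b ∈ I ⊔ J) :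
    ∃ z, z - a ∈ I ∧ z - b ∈ J := by
  obtain ⟨x, hx, y, hy, hxy⟩ := Submodule.mem_sup.mp h
  refine ⟨a - x, by simpa using I.neg_mem hx, ?_⟩
  rwa [show a - x - b = y by linear_combination -hxy]

theorem Ideal.exists_forall_sub_mem_of_sub_mem_sup {ι : Type*} (I : ι → Ideal R) (u : ι → R)
    (hI : ∀ (t : Finset ι) j, t.inf (fun i => I i ⊔ I j) ≤ t.inf I ⊔ I j)
    (hu : ∀ i j, u i - u j ∈ I i ⊔ I j) (s : Finset ι) :
    ∃ z, ∀ i ∈ s, z - u i ∈ I i := by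
  classical
  induction s using Finset.induction_on with
  | empty => exact ⟨0, by simp⟩
  | insert j s _ ih =>
    obtain ⟨z, hz⟩ := ih
    have hzj : z - u j ∈ s.inf I ⊔ I j := hI s j <| Submodule.mem_finsetInf.mpr fun i hi => by
      simpa using add_mem (mem_sup_left (hz i hi)) (hu i j)
    obtain ⟨y, hyz, hyj⟩ := exists_sub_mem_of_sub_mem_sup hzj
    refine ⟨y, Finset.forall_mem_insert _ _ _ |>.mpr ⟨hyj, fun i hi => ?_⟩⟩
    simpa using add_mem (Submodule.mem_finsetInf.mp hyz i hi) (hz i hi)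

end CommRing

section GCDMonoid

variable {R : Type*} [CommRing R] [GCDMonoid R]

theorem Ideal.span_singleton_sup_span_singleton_eq_span_gcd {a b : R}
    (h : ∃ x y : R, gcd a b = x * a + y * b) : span {a} ⊔ span {b} = span {gcd a b} := by
  obtain ⟨x, y, hxy⟩ := h
  refine le_antisymm (sup_le ?_ ?_) (span_singleton_le_iff_mem _ |>.mpr ?_)
  · exact span_singleton_le_span_singleton.mpr (gcd_dvd_left a b)
  · exact span_singleton_le_span_singleton.mpr (gcd_dvd_right a b)
  · rw [hxy]
    exact add_mem (mem_sup_left (mul_mem_left _ x (mem_span_singleton_self a)))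
      (mem_sup_right (mul_mem_left _ y (mem_span_singleton_self b)))

theorem Ideal.span_singleton_inf_span_singleton_eq_span_lcm (a b : R) :
    span {a} ⊓ span {b} = span {lcm a b} := by
  ext x
  simp only [mem_inf, mem_span_singleton, lcm_dvd_iff]

theorem Ideal.isPrincipal_inf {I J : Ideal R} (hI : I.IsPrincipal) (hJ : J.IsPrincipal) :
    (I ⊓ J).IsPrincipal := by
  obtain ⟨a, rfl⟩ := hI
  obtain ⟨b, rfl⟩ := hJ
  simp only [submodule_span_eq, span_singleton_inf_span_singleton_eq_span_lcm]
  exact ⟨lcm a b, rfl⟩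

theorem Ideal.isPrincipal_finset_inf {ι : Type*} {I : ι → Ideal R}
    (hI : ∀ i, (I i).IsPrincipal) (t : Finset ι) : (t.inf I).IsPrincipal := by
  classical
  induction t using Finset.induction_on with
  | empty => exact top_isPrincipal
  | insert a t _ ih => simpa only [Finset.inf_insert] using isPrincipal_inf (hI a) ih

theorem Ideal.exists_isCoprime_of_span_singleton_sup_eq {a d : R} {C : Ideal R}
    (h : span {a} ⊔ C = span {d}) (hd : d ≠ 0) :
    ∃ a' g, a = d * a' ∧ d * g ∈ C ∧ IsCoprime a' g := by
  obtain ⟨a', ha'⟩ := mem_span_singleton.mp (h ▸ mem_sup_left (mem_span_singleton_self a))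
  obtain ⟨α, hα, γ, hγ, hαγ⟩ := Submodule.mem_sup.mp (h ▸ mem_span_singleton_self d)
  obtain ⟨x, rfl⟩ := mem_span_singleton'.mp hα
  obtain ⟨g, rfl⟩ := mem_span_singleton.mp (h ▸ mem_sup_right hγ)
  refine ⟨a', g, ha', hγ, x, 1, mul_left_cancel₀ hd ?_⟩
  linear_combination hαγ - x * ha'

theorem Ideal.lcm_mem_span_lcm_sup {a b d₁ d₂ a' b' g₁ g₂ : R} {C : Ideal R}
    (ha : a = d₁ * a') (hb : b = d₂ * b') (hg₁ : d₁ * g₁ ∈ C) (hg₂ : d₂ * g₂ ∈ C)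
    (h₁ : IsCoprime a' g₁) (h₂ : IsCoprime b' g₂) : lcm d₁ d₂ ∈ span {lcm a b} ⊔ C := by
  subst ha hb
  obtain ⟨x₁, y₁, hxy₁⟩ := h₁
  obtain ⟨x₂, y₂, hxy₂⟩ := h₂
  obtain ⟨M₁, hM₁⟩ : d₁ ∣ lcm d₁ d₂ := dvd_lcm_left _ _
  obtain ⟨M₂, hM₂⟩ : d₂ ∣ lcm d₁ d₂ := dvd_lcm_right _ _
  obtain ⟨k, hk⟩ : lcm (d₁ * a') (d₂ * b') ∣ a' * b' * lcm d₁ d₂ :=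
    lcm_dvd ⟨b' * M₁, by rw [hM₁]; ring⟩ ⟨a' * M₂, by rw [hM₂]; ring⟩
  have hM : lcm d₁ d₂ = x₁ * x₂ * k * lcm (d₁ * a') (d₂ * b')
      + M₁ * y₁ * (x₂ * b' + y₂ * g₂) * (d₁ * g₁) + M₂ * x₁ * a' * y₂ * (d₂ * g₂) := by
    linear_combination -(lcm d₁ d₂ * (x₂ * b' + y₂ * g₂)) * hxy₁ - lcm d₁ d₂ * hxy₂
      + x₁ * x₂ * hk + y₁ * (x₂ * b' + y₂ * g₂) * g₁ * hM₁ + x₁ * a' * y₂ * g₂ * hM₂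
  rw [hM]
  exact add_mem (add_mem (mem_sup_left (mul_mem_left _ _ (mem_span_singleton_self _)))
    (mem_sup_right (C.mul_mem_left _ hg₁))) (mem_sup_right (C.mul_mem_left _ hg₂))

theorem Ideal.sup_inf_sup_le_inf_sup_of_isPrincipal {A B C : Ideal R} (hA : A.IsPrincipal) (hB : B.IsPrincipal)
    (hAC : (A ⊔ C).IsPrincipal) (hBC : (B ⊔ C).IsPrincipal) :
    (A ⊔ C) ⊓ (B ⊔ C) ≤ A ⊓ B ⊔ C := by
  obtain ⟨a, rfl⟩ := hA
  obtain ⟨b, rfl⟩ := hB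
  obtain ⟨d₁, hd₁⟩ := hAC
  obtain ⟨d₂, hd₂⟩ := hBC
  simp only [submodule_span_eq] at hd₁ hd₂ ⊢
  rw [hd₁, hd₂, span_singleton_inf_span_singleton_eq_span_lcm,
    span_singleton_inf_span_singleton_eq_span_lcm, span_singleton_le_iff_mem]
  rcases eq_or_ne d₁ 0 with rfl | h₁
  · simp
  rcases eq_or_ne d₂ 0 with rfl | h₂
  · simp
  obtain ⟨a', g₁, ha, hg₁, hcop₁⟩ := exists_isCoprime_of_span_singleton_sup_eq hd₁ h₁
  obtain ⟨b', g₂, hb, hg₂, hcop₂⟩ := exists_isCoprime_of_span_singleton_sup_eq hd₂ h₂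
  exact lcm_mem_span_lcm_sup ha hb hg₁ hg₂ hcop₁ hcop₂

theorem Ideal.finset_inf_sup_eq_of_isPrincipal {ι : Type*} {I : ι → Ideal R} {C : Ideal R}
    (hI : ∀ i, (I i).IsPrincipal) (hIC : ∀ i, (I i ⊔ C).IsPrincipal) (t : Finset ι) :
    t.inf I ⊔ C = t.inf (fun i => I i ⊔ C) := by
  classical
  induction t using Finset.induction_on with
  | empty => simp
  | insert a t _ ih =>
    rw [Finset.inf_insert, Finset.inf_insert, ← ih]
    refine le_antisymm (le_inf (sup_le_sup_right inf_le_left C) (sup_le_sup_right inf_le_right C))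
      (sup_inf_sup_le_inf_sup_of_isPrincipal (hI a) (isPrincipal_finset_inf hI t) (hIC a) ?_)
    exact ih ▸ isPrincipal_finset_inf hIC t

end GCDMonoid

theorem generalized_crt_general
    {R : Type*} [CommRing R] [GCDMonoid R]
    (m : ℕ) (u v : Fin m → R)
    (hBez : ∀ i j, ∃ x y : R, gcd (v i) (v j) = x * v i + y * v j) :
    (∃ z : R, ∀ i, v i ∣ z - u i) ↔ (∀ i j, gcd (v i) (v j) ∣ u i - u j) := by
  have hsup (i j) : span {v i} ⊔ span {v j} = span {gcd (v i) (v j)} :=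
    span_singleton_sup_span_singleton_eq_span_gcd (hBez i j)
  constructor
  · rintro ⟨z, hz⟩ i j
    simpa using dvd_sub ((gcd_dvd_right _ _).trans (hz j)) ((gcd_dvd_left _ _).trans (hz i))
  · intro hu
    obtain ⟨z, hz⟩ := exists_forall_sub_mem_of_sub_mem_sup (fun i => span {v i}) u
      (fun t j => (finset_inf_sup_eq_of_isPrincipal (fun i => ⟨v i, rfl⟩) (fun i => ⟨_, hsup i j⟩) t).ge)
      (fun i j => hsup i j ▸ mem_span_singleton.mpr (hu i j)) Finset.univ
    exact ⟨z, fun i => mem_span_singleton.mp (hz i (Finset.mem_univ i))⟩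

/-- **Generalized Chinese Remainder Theorem.** Let `R` be a GCD domain and
`u i, v i ∈ R` for `i = 1, ..., m` with each `v i ≠ 0`. If `gcd (v i) (v j)` lies in
the ideal `R·v i + R·v j` for all `i, j`, then the system of congruences
`z ≡ u i (mod v i)` is solvable in `R` iff `gcd (v i) (v j) ∣ (u i - u j)` for all
`i, j`. -/
theorem generalized_crt
    {R : Type*} [CommRing R] [IsDomain R] [GCDMonoid R]
    (m : ℕ) (hm : 0 < m) (u v : Fin m → R) (hv : ∀ i, v i ≠ 0)
    (hBez : ∀ i j, ∃ x y : R, gcd (v i) (v j) = x * v i + y * v j) :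
    (∃ z : R, ∀ i, v i ∣ z - u i) ↔ (∀ i j, gcd (v i) (v j) ∣ u i - u j) :=
  generalized_crt_general m u v hBez
end

section
/- Let a and d be coprime positive integers and let n be a positive integer with n ≤ 16 such that no term of the arithmetic progression a, a+d, ..., a+(n−1)d is a perfect power. Then the product ∏_{k=0}^{n−1} (a + k·d) is not a perfect power. -/
/-!
A prime dividing two terms `a + i * d` and `a + j * d` divides `(i - j) * d`, hence `i - j`
because `a` and `d` are coprime; so the indices of the terms divisible by a prime `p` form a
single residue class mod `p`, and such a prime is shared by two terms only if that class has two
members below `n`, which forces `p < n ≤ 16`. A finite check (Pillai's: among at most 16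
consecutive integers one is coprime to all the others) shows that, whatever the residue classes
for `p = 2, 3, 5, 7, 11, 13` are, some index `i < n` lies in none of the shared ones. Then
`a + i * d` is coprime to the product of the other terms, so if the whole product is an `r`-th
power then so is `a + i * d`. When `a = 1` that term may be the unit `1`, so the first term is
dropped beforehand.
-/

open Finset

def IsPerfectPower (x : ℤ) : Prop :=
  ∃ (t : ℤ) (r : ℕ), 1 < t ∧ 1 < r ∧ x = t ^ r

theorem not_isPerfectPower_one : ¬IsPerfectPower 1 := by
  rintro ⟨t, r, ht, hr, h⟩
  exact (one_lt_pow₀ ht (by omega)).ne h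

theorem Prime.dvd_sub_of_dvd_add_mul_s9 {R : Type*} [CommRing R] {p a d x y : R} (hp : Prime p)
    (had : IsCoprime a d) (hx : p ∣ a + x * d) (hy : p ∣ a + y * d) : p ∣ x - y := by
  have hpd : ¬p ∣ d := fun hd =>
    hp.not_isUnit (had.isUnit_of_dvd' ((dvd_add_left (dvd_mul_of_dvd_right hd x)).mp hx) hd)
  refine (hp.dvd_or_dvd ?_).resolve_right hpd
  rw [show (x - y) * d = a + x * d - (a + y * d) by ring]
  exact dvd_sub hx hy

theorem exists_mod_eq_of_dvd_add_mul {a d : ℤ} (had : IsCoprime a d) {p : ℕ} (hp : p.Prime) :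
    ∃ c, ∀ m : ℕ, (p : ℤ) ∣ a + m * d → m % p = c := by
  by_cases h : ∃ m₀ : ℕ, (p : ℤ) ∣ a + m₀ * d
  · obtain ⟨m₀, hm₀⟩ := h
    exact ⟨m₀ % p, fun m hm =>
      Nat.modEq_iff_dvd.mpr ((Nat.prime_iff_prime_int.mp hp).dvd_sub_of_dvd_add_mul_s9 had hm₀ hm)⟩
  · push Not at h
    exact ⟨0, fun m hm => absurd hm (h m)⟩

/-- `i` lies in the residue class `c` mod `p`, and this class has a second member below `n`. -/
def SharesClass (n p c i : ℕ) : Prop :=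
  i % p = c ∧ c + p < n

instance (n p c i : ℕ) : Decidable (SharesClass n p c i) :=
  inferInstanceAs (Decidable (_ ∧ _))

theorem sharesClass_of_mod_eq {n p c i j : ℕ} (hi : i % p = c) (hj : j % p = c) (hij : i ≠ j)
    (hin : i < n) (hjn : j < n) : SharesClass n p c i := by
  refine ⟨hi, ?_⟩
  wlog hlt : i < j generalizing i j
  · exact this hj hi hij.symm hjn hin (by omega)
  have hdvd : p ∣ j - i :=
    Nat.dvd_of_mod_eq_zero (Nat.sub_mod_eq_zero_of_mod_eq (hj.trans hi.symm))
  have := Nat.le_of_dvd (by omega) hdvd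
  have := Nat.mod_le i p
  omega

/-- Residues `c₁₁ ≥ 5` and `c₁₃ ≥ 3` need not be checked: for `n ≤ 16` those classes have at
most one member below `n`. -/
theorem exists_not_sharesClass_of_residues :
    ∀ n, 0 < n → n ≤ 16 → ∀ c₂ < 2, ∀ c₃ < 3, ∀ c₅ < 5, ∀ c₇ < 7, ∀ c₁₁ < 5, ∀ c₁₃ < 3,
      ∃ i < n, ¬SharesClass n 2 c₂ i ∧ ¬SharesClass n 3 c₃ i ∧ ¬SharesClass n 5 c₅ i ∧
        ¬SharesClass n 7 c₇ i ∧ ¬SharesClass n 11 c₁₁ i ∧ ¬SharesClass n 13 c₁₃ i := by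
  have h : ((List.range 16).all fun m => (List.range 2).all fun c₂ => (List.range 3).all fun c₃ =>
      (List.range 5).all fun c₅ => (List.range 7).all fun c₇ => (List.range 5).all fun c₁₁ =>
      (List.range 3).all fun c₁₃ => (List.range (m + 1)).any fun i =>
        decide (¬SharesClass (m + 1) 2 c₂ i ∧ ¬SharesClass (m + 1) 3 c₃ i ∧
          ¬SharesClass (m + 1) 5 c₅ i ∧ ¬SharesClass (m + 1) 7 c₇ i ∧
          ¬SharesClass (m + 1) 11 c₁₁ i ∧ ¬SharesClass (m + 1) 13 c₁₃ i)) = true := by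
    decide +kernel
  simp only [List.all_eq_true, List.any_eq_true, List.mem_range, decide_eq_true_eq] at h
  intro n hn hn16
  obtain ⟨m, rfl⟩ : ∃ m, n = m + 1 := ⟨n - 1, by omega⟩
  exact h m (by omega)

theorem exists_forall_not_sharesClass {n : ℕ} (hn : 0 < n) (hn16 : n ≤ 16) (c : ℕ → ℕ) :
    ∃ i < n, ∀ p, p.Prime → ¬SharesClass n p (c p) i := by
  -- A class without a second member below `n` is harmless and its residue can be replaced by `0`.
  let c' p := if c p < p ∧ c p + p < n then c p else 0
  have hc' : ∀ p, 0 < p → ∀ i, ¬SharesClass n p (c' p) i → ¬SharesClass n p (c p) i := by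
    rintro p hp0 i h ⟨hi, hp⟩
    have : c' p = c p := if_pos ⟨hi ▸ Nat.mod_lt i hp0, hp⟩
    exact h (this ▸ ⟨hi, hp⟩)
  have hc'_lt : ∀ p, c' p < max 1 (min p (n - p)) := fun p => by
    simp only [c']
    split_ifs <;> omega
  obtain ⟨i, hi, h₂, h₃, h₅, h₇, h₁₁, h₁₃⟩ := exists_not_sharesClass_of_residues n hn hn16
    (c' 2) (by grind) (c' 3) (by grind) (c' 5) (by grind) (c' 7) (by grind)
    (c' 11) (by grind) (c' 13) (by grind)
  refine ⟨i, hi, fun p hp hs => ?_⟩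
  have : p < 16 := by have := hs.2; omega
  interval_cases p <;> norm_num at hp
  all_goals exact hc' _ (by norm_num) _ (by assumption) hs

theorem exists_forall_ne_isCoprime_add_mul {a d : ℤ} (had : IsCoprime a d) {n : ℕ} (hn : 0 < n)
    (hn16 : n ≤ 16) : ∃ i < n, ∀ j < n, j ≠ i → IsCoprime (a + i * d) (a + j * d) := by
  choose! c hc using fun (p : ℕ) (hp : p.Prime) => exists_mod_eq_of_dvd_add_mul had hp
  obtain ⟨i, hi, hfree⟩ := exists_forall_not_sharesClass hn hn16 c
  refine ⟨i, hi, fun j hj hji => Int.isCoprime_iff_nat_coprime.mpr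
    (Nat.coprime_of_dvd fun q hq hqi hqj => ?_)⟩
  rw [← Int.natCast_dvd] at hqi hqj
  exact hfree q hq (sharesClass_of_mod_eq (hc q hq i hqi) (hc q hq j hqj) hji.symm hi hj)

theorem Int.exists_natAbs_eq_pow_of_mul_eq_pow {a b c : ℤ} (hab : IsCoprime a b) {k : ℕ}
    (h : a * b = c ^ k) : ∃ d : ℕ, a.natAbs = d ^ k := by
  obtain ⟨d, hd⟩ := exists_associated_pow_of_mul_eq_pow' hab h
  exact ⟨d.natAbs, by rw [← Int.associated_iff_natAbs.mp hd, Int.natAbs_pow]⟩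

theorem exists_natAbs_add_mul_eq_pow_of_prod_eq_pow {a d t : ℤ} {n r : ℕ} (had : IsCoprime a d)
    (hn : 0 < n) (hn16 : n ≤ 16) (h : ∏ k ∈ range n, (a + k * d) = t ^ r) :
    ∃ i < n, ∃ s : ℕ, (a + i * d).natAbs = s ^ r := by
  obtain ⟨i, hi, hcop⟩ := exists_forall_ne_isCoprime_add_mul had hn hn16
  rw [← mul_prod_erase _ _ (mem_range.mpr hi)] at h
  have hcop_rest : IsCoprime (a + i * d) (∏ j ∈ (range n).erase i, (a + j * d)) :=
    IsCoprime.prod_right fun j hj =>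
      hcop j (mem_range.mp (mem_of_mem_erase hj)) (ne_of_mem_erase hj)
  exact ⟨i, hi, Int.exists_natAbs_eq_pow_of_mul_eq_pow hcop_rest h⟩

theorem not_isPerfectPower_prod_add_mul {a d : ℤ} (ha : 1 < a) (hd : 0 ≤ d)
    (had : IsCoprime a d) {n : ℕ} (hn16 : n ≤ 16)
    (hterms : ∀ k < n, ¬IsPerfectPower (a + k * d)) :
    ¬IsPerfectPower (∏ k ∈ range n, (a + k * d)) := by
  rintro ⟨t, r, ht, hr, h⟩
  obtain rfl | hn := Nat.eq_zero_or_pos n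
  · exact not_isPerfectPower_one ⟨t, r, ht, hr, h⟩
  obtain ⟨i, hi, s, hs⟩ := exists_natAbs_add_mul_eq_pow_of_prod_eq_pow had hn hn16 h
  have hterm_gt : 1 < a + i * d := by nlinarith
  have hterm : a + i * d = (s : ℤ) ^ r := by
    rw [← Int.natAbs_of_nonneg (by omega : 0 ≤ a + i * d), hs, Nat.cast_pow]
  refine hterms i hi ⟨s, r, ?_, hr, hterm⟩
  by_contra! hs1
  linarith [pow_le_one₀ (n := r) (Nat.cast_nonneg s) hs1]

theorem prod_range_succ_add_mul (a d : ℤ) (m : ℕ) :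
    ∏ k ∈ range (m + 1), (a + k * d) = a * ∏ k ∈ range m, (a + d + k * d) := by
  rw [prod_range_succ', mul_comm]
  push_cast
  simp only [zero_mul, add_zero, add_mul, one_mul, add_comm d, add_assoc]

theorem prod_ap_not_perfect_power_general (a d : ℤ) (ha : 0 < a) (hd : 0 < d)
    (had : Int.gcd a d = 1) (n : ℕ) (hn16 : n ≤ 16)
    (hterms : ∀ k < n, ¬∃ (t : ℤ) (r : ℕ), 1 < t ∧ 1 < r ∧ a + (k : ℤ) * d = t ^ r) :
    ¬∃ (t : ℤ) (r : ℕ), 1 < t ∧ 1 < r ∧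
      (∏ k ∈ Finset.range n, (a + (k : ℤ) * d)) = t ^ r := by
  obtain rfl | ha1 : a = 1 ∨ 1 < a := by omega
  · cases n with
    | zero => exact not_isPerfectPower_one
    | succ m =>
      rw [prod_range_succ_add_mul, one_mul]
      refine not_isPerfectPower_prod_add_mul (by omega) hd.le
        (by simpa using (isCoprime_one_left (x := d)).add_mul_left_left 1) (by omega) fun k hk => ?_
      have hshift : 1 + d + k * d = 1 + ((k + 1 : ℕ) : ℤ) * d := by push_cast; ring
      rw [hshift]
      exact hterms (k + 1) (by omega)
  · exact not_isPerfectPower_prod_add_mul ha1 hd.le (Int.isCoprime_iff_gcd_eq_one.mpr had) hn16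
      hterms

/-- If `a, d` are coprime positive integers and `n ≤ 16` is a positive integer such
that no term of the progression `a, a+d, ..., a+(n-1)d` is a perfect power, then the
product of the terms is not a perfect power. -/
theorem prod_ap_not_perfect_power (a d : ℤ) (ha : 0 < a) (hd : 0 < d)
    (had : Int.gcd a d = 1) (n : ℕ) (hn : 0 < n) (hn16 : n ≤ 16)
    (hterms : ∀ k < n, ¬∃ (t : ℤ) (r : ℕ), 1 < t ∧ 1 < r ∧ a + (k : ℤ) * d = t ^ r) :
    ¬∃ (t : ℤ) (r : ℕ), 1 < t ∧ 1 < r ∧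
      (∏ k ∈ Finset.range n, (a + (k : ℤ) * d)) = t ^ r :=
  prod_ap_not_perfect_power_general a d ha hd had n hn16 hterms
end

section
/- Let a and d be coprime integers and let n be a positive integer. Then there exists an integer z such that a + (i−1)d divides z − i for every i = 1, ..., n. -/
/-! Modulo `a + k d` we have `k d ≡ -a`, so `d z ≡ -a` forces `z ≡ k` as soon as `d` is invertible
there. Since `d` is coprime to `a`, it is coprime to every `a + k d` and hence to their product,
so a single solution of `d z ≡ -a` modulo the product serves all the moduli at once. -/

namespace IsCoprime

variable {R : Type*} [CommRing R] {a d : R}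

theorem add_mul_dvd_sub_of_dvd_mul_add (h : IsCoprime a d) (k : R) {z : R}
    (hz : a + k * d ∣ d * z + a) : a + k * d ∣ z - k := by
  refine (h.add_mul_right_left k).dvd_of_dvd_mul_left ?_
  have hsplit : d * (z - k) = (d * z + a) - (a + k * d) := by ring
  exact hsplit ▸ dvd_sub hz dvd_rfl

theorem exists_dvd_mul_add {m : R} (h : IsCoprime d m) (c : R) : ∃ z, m ∣ d * z + c := by
  obtain ⟨u, v, huv⟩ := h
  exact ⟨-c * u, c * v, by linear_combination -c * huv⟩

theorem exists_forall_add_mul_dvd_sub (h : IsCoprime a d) (s : Finset R) :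
    ∃ z, ∀ k ∈ s, a + k * d ∣ z - k := by
  have hprod : IsCoprime d (∏ k ∈ s, (a + k * d)) :=
    IsCoprime.prod_right fun k _ => (h.add_mul_right_left k).symm
  obtain ⟨z, hz⟩ := hprod.exists_dvd_mul_add a
  refine ⟨z, fun k hk => h.add_mul_dvd_sub_of_dvd_mul_add k ?_⟩
  exact (Finset.dvd_prod_of_mem _ hk).trans hz

end IsCoprime

theorem exists_simultaneous_congruence_general (a d : ℤ) (had : Int.gcd a d = 1)
    (n : ℕ) :
    ∃ z : ℤ, ∀ i : ℕ, 1 ≤ i → i ≤ n → (a + ((i : ℤ) - 1) * d) ∣ (z - (i : ℤ)) := by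
  obtain ⟨z, hz⟩ := (Int.isCoprime_iff_gcd_eq_one.mpr had).exists_forall_add_mul_dvd_sub
    ((Finset.Icc 1 n).image fun i : ℕ => (i : ℤ) - 1)
  refine ⟨z + 1, fun i h1 h2 => ?_⟩
  have hi := hz _ (Finset.mem_image_of_mem _ (Finset.mem_Icc.mpr ⟨h1, h2⟩))
  rwa [sub_sub_eq_add_sub] at hi

/-- If `a` and `d` are coprime integers and `n` is a positive integer, then there is
an integer `z` such that `a + (i-1)d` divides `z - i` for every `i = 1, ..., n`. -/
theorem exists_simultaneous_congruence (a d : ℤ) (had : Int.gcd a d = 1)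
    (n : ℕ) (hn : 0 < n) :
    ∃ z : ℤ, ∀ i : ℕ, 1 ≤ i → i ≤ n → (a + ((i : ℤ) - 1) * d) ∣ (z - (i : ℤ)) :=
  exists_simultaneous_congruence_general a d had n
end

section
/- There exist infinitely many pairs (a, d) of coprime positive integers such that all three terms a, a+d, a+2d of the arithmetic progression are perfect squares; that is, the set of pairs (a,d) of coprime positive integers for which a, a+d and a+2d are each a square of an integer is infinite. -/
/-!
A solution of `p² + r² = 2q²` with `p, q` coprime and `0 < p² < q²` gives the pair `(p², q² - p²)`,
whose progression is `p², q², r²` and which is coprime because `gcd(p², q² - p²) = gcd(p², q²)`.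
Such solutions come from `(m² - 2mn - n²)² + (m² + 2mn - n²)² = 2(m² + n²)²`; taking `m = 2j`, `n = 1`
gives the family `p = 4j² - 4j - 1`, `q = 4j² + 1`, `r = 4j² + 4j - 1`, which is coprime for every `j`
and has `p² < q²` for `j ≥ 1`.
-/

def IsCoprimeSquareAP (a d : ℤ) : Prop :=
  0 < a ∧ 0 < d ∧ Int.gcd a d = 1 ∧
    (∃ t : ℤ, a = t ^ 2) ∧ (∃ t : ℤ, a + d = t ^ 2) ∧ (∃ t : ℤ, a + 2 * d = t ^ 2)

theorem IsCoprime.sq_sq_sub_sq {R : Type*} [CommRing R] {p q : R} (h : IsCoprime p q) :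
    IsCoprime (p ^ 2) (q ^ 2 - p ^ 2) := by
  simpa [sub_eq_add_neg] using (h.pow (m := 2) (n := 2)).add_mul_left_right (-1)

theorem isCoprimeSquareAP_of_sq_add_sq {p q r : ℤ} (hpq : IsCoprime p q) (hp : p ≠ 0)
    (hlt : p ^ 2 < q ^ 2) (h : p ^ 2 + r ^ 2 = 2 * q ^ 2) :
    IsCoprimeSquareAP (p ^ 2) (q ^ 2 - p ^ 2) :=
  ⟨sq_pos_of_ne_zero hp, sub_pos.2 hlt, Int.isCoprime_iff_gcd_eq_one.1 hpq.sq_sq_sub_sq,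
    ⟨p, rfl⟩, ⟨q, by ring⟩, ⟨r, by linear_combination -h⟩⟩

theorem sq_add_sq_eq_two_mul_sq (m n : ℤ) :
    (m ^ 2 - 2 * m * n - n ^ 2) ^ 2 + (m ^ 2 + 2 * m * n - n ^ 2) ^ 2 = 2 * (m ^ 2 + n ^ 2) ^ 2 := by
  ring

theorem isCoprime_four_mul_sq_sub_four_mul_sub_one (j : ℤ) :
    IsCoprime (4 * j ^ 2 - 4 * j - 1) (4 * j ^ 2 + 1) :=
  ⟨2 * j ^ 2 * (2 * j ^ 2 - j + 1), 1 - 2 * j ^ 2 + 6 * j ^ 3 - 4 * j ^ 4, by ring⟩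

theorem isCoprimeSquareAP_family {j : ℤ} (hj : 1 ≤ j) :
    IsCoprimeSquareAP ((4 * j ^ 2 - 4 * j - 1) ^ 2)
      ((4 * j ^ 2 + 1) ^ 2 - (4 * j ^ 2 - 4 * j - 1) ^ 2) := by
  have hodd : 4 * j ^ 2 - 4 * j - 1 = 2 * (2 * j ^ 2 - 2 * j - 1) + 1 := by ring
  refine isCoprimeSquareAP_of_sq_add_sq (r := 4 * j ^ 2 + 4 * j - 1)
    (isCoprime_four_mul_sq_sub_four_mul_sub_one j) (by omega) ?_ ?_
  · nlinarith
  · linear_combination sq_add_sq_eq_two_mul_sq (2 * j) 1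

/-- There are infinitely many pairs `(a, d)` of coprime positive integers such that
`a`, `a + d` and `a + 2d` are all perfect squares. -/
theorem infinite_square_ap_pairs :
    {p : ℤ × ℤ | 0 < p.1 ∧ 0 < p.2 ∧ Int.gcd p.1 p.2 = 1 ∧
      (∃ t : ℤ, p.1 = t ^ 2) ∧ (∃ t : ℤ, p.1 + p.2 = t ^ 2) ∧
      (∃ t : ℤ, p.1 + 2 * p.2 = t ^ 2)}.Infinite := by
  refine Set.infinite_of_injOn_mapsTo
    (f := fun j : ℤ => ((4 * j ^ 2 - 4 * j - 1) ^ 2,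
      (4 * j ^ 2 + 1) ^ 2 - (4 * j ^ 2 - 4 * j - 1) ^ 2))
    ?_ (fun j hj => isCoprimeSquareAP_family hj) (Set.Ici_infinite 1)
  intro i (hi : 1 ≤ i) j (hj : 1 ≤ j) hij
  have hsum : (4 * i ^ 2 + 1) ^ 2 = (4 * j ^ 2 + 1) ^ 2 := by
    simpa using congrArg (fun x : ℤ × ℤ => x.1 + x.2) hij
  have hsq : i ^ 2 = j ^ 2 := by
    linarith [(sq_eq_sq₀ (by positivity) (by positivity)).1 hsum]
  exact (sq_eq_sq₀ (by linarith) (by linarith)).1 hsq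
end
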